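/- arXiv:2602.00636 — 8 statements merged into one kernel-verified Lean document; each statement's English description precedes it below -/
import Mathlib

section
/- Let Z be the maximum feasible zone under uncertain model f̂₁. If Z is expandable under another uncertain model f̂₂ (i.e., Z is a proper subset of the maximum feasible zone under f̂₂), then there exists (x,u) ∈ 𝒵 \ Z and a state x' ∈ f̂₁(x,u) such that x' ∉ f̂₂(x,u). -/
/-- Projection of a zone onto the state space. -/
def projX {S A : Type*} (Z : Set (S × A)) : Set S := {x | ∃ u, (x, u) ∈ Z}

/-- A zone is feasible under an uncertain model. -/
def FeasibleZone {S A : Type*} (Xcstr : Set S) (fh : S × A → Set S)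
    (Z : Set (S × A)) : Prop :=
  projX Z ⊆ Xcstr ∧ ∀ p ∈ Z, fh p ⊆ projX Z

/-- The maximum feasible zone: the union of all feasible zones. -/
def Zstar {S A : Type*} (Xcstr : Set S) (fh : S × A → Set S) : Set (S × A) :=
  ⋃₀ {Z | FeasibleZone Xcstr fh Z}

lemma projX_mono {S A : Type*} {Z W : Set (S × A)} (h : Z ⊆ W) :
    projX Z ⊆ projX W := fun _ ⟨u, hu⟩ => ⟨u, h hu⟩

lemma Zstar_feasible {S A : Type*} (Xcstr : Set S) (fh : S × A → Set S) :
    FeasibleZone Xcstr fh (Zstar Xcstr fh) := by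
  constructor
  · rintro x ⟨u, W, hW, hp⟩
    exact hW.1 ⟨u, hp⟩
  · rintro p ⟨W, hW, hp⟩ x hx
    exact projX_mono (Set.subset_sUnion_of_mem hW) (hW.2 p hp hx)

/-- if the maximum feasible zone under `fh1` is expandable under
`fh2`, some transition of `fh1` outside that zone is not a transition of `fh2`. -/
theorem exists_pruned_transition_of_expandable {S A : Type*} (Xcstr : Set S)
    (fh1 fh2 : S × A → Set S) (Z : Set (S × A)) (hZ : Z = Zstar Xcstr fh1)
    (hexp : Z ⊂ Zstar Xcstr fh2) :
    ∃ p ∈ Set.univ \ Z, ∃ x' ∈ fh1 p, x' ∉ fh2 p := by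
  by_contra hcon
  push_neg at hcon
  have h2 := Zstar_feasible Xcstr fh2
  have hfeas : FeasibleZone Xcstr fh1 (Zstar Xcstr fh2) := by
    constructor
    · exact h2.1
    · intro p hp x hx
      by_cases hpZ : p ∈ Z
      · have := (Zstar_feasible Xcstr fh1).2 p (hZ ▸ hpZ) hx
        exact projX_mono hexp.1 (hZ ▸ this)
      · exact h2.2 p hp (hcon p ⟨trivial, hpZ⟩ x hx)
  exact hexp.2 (hZ ▸ Set.subset_sUnion_of_mem hfeas)
end

section
/- In the uncertain model graph D_f̂(L), a vertex (x,u,x') is removable of the second kind (i.e., there exists no L-Lipschitz function f₀ : 𝒵 → 𝒳 with f₀(x,u) = x' and f₀(z) ∈ f̂(z) for all z ∈ 𝒵) if and only if (x,u,x') does not belong to any N-clique of D_f̂(L), where N = |𝒵|. -/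
/-- Adjacency in the uncertain model graph `D_f̂(L)`: two transition pairs are
adjacent iff their state-action pairs differ and they satisfy `L`-Lipschitz
continuity. -/
def ModelAdj {Z X : Type*} [MetricSpace Z] [MetricSpace X] (L : ℝ)
    (p q : Z × X) : Prop :=
  p.1 ≠ q.1 ∧ dist p.2 q.2 ≤ L * dist p.1 q.1

/-- `S` is an `N`-clique of the uncertain model graph containing the given
vertex is expressed by: all members are vertices, `S` has `N` elements, and
its members are pairwise adjacent. -/
def IsNClique {Z X : Type*} [Fintype Z] [MetricSpace Z] [MetricSpace X]
    (L : ℝ) (fh : Z → Set X) (S : Set (Z × X)) : Prop :=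
  (∀ p ∈ S, p.2 ∈ fh p.1) ∧ S.ncard = Fintype.card Z ∧
    ∀ p ∈ S, ∀ q ∈ S, p ≠ q → ModelAdj L p q

/-- a vertex `(x,u,x')` of `D_f̂(L)` is removable of the second
kind (no `L`-Lipschitz selection `f₀` of `f̂` passes through it) iff it belongs
to no `N`-clique of `D_f̂(L)`, `N = |𝒵|`. -/
theorem removable_second_kind_iff_not_mem_clique {Z X : Type*} [Fintype Z]
    [MetricSpace Z] [MetricSpace X] (L : ℝ) (fh : Z → Set X)
    (hne : ∀ z, (fh z).Nonempty) (z0 : Z) (x0' : X) (hx0 : x0' ∈ fh z0) :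
    (¬ ∃ f0 : Z → X, f0 z0 = x0' ∧
        (∀ z1 z2, dist (f0 z1) (f0 z2) ≤ L * dist z1 z2) ∧
        (∀ z, f0 z ∈ fh z)) ↔
      ¬ ∃ S : Set (Z × X), IsNClique L fh S ∧ (z0, x0') ∈ S := by
  apply not_congr
  constructor
  · rintro ⟨f0, hf0, hlip, hmem⟩
    refine ⟨Set.range (fun z => (z, f0 z)), ⟨?_, ?_, ?_⟩, ⟨z0, by simp [hf0]⟩⟩
    · rintro p ⟨z, rfl⟩; exact hmem z
    · have hinj : Function.Injective (fun z => (z, f0 z)) := by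
        intro a b h; exact (Prod.mk.injEq _ _ _ _).mp h |>.1
      rw [← Nat.card_coe_set_eq, Nat.card_range_of_injective hinj,
          Nat.card_eq_fintype_card]
    · rintro p ⟨a, rfl⟩ q ⟨b, rfl⟩ hpq
      have hab : a ≠ b := fun h => hpq (by rw [h])
      exact ⟨hab, hlip a b⟩
  · rintro ⟨S, ⟨hvert, hcard, hadj⟩, hz0⟩
    -- distinct elements of S have distinct first coords
    have huniq : ∀ p ∈ S, ∀ q ∈ S, p.1 = q.1 → p = q := by
      intro p hp q hq h
      by_contra hne'
      exact (hadj p hp q hq hne').1 h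
    have hZpos : 0 < Fintype.card Z := Fintype.card_pos_iff.mpr ⟨z0⟩
    have hfin : S.Finite := by
      by_contra h
      rw [Set.Infinite.ncard h] at hcard
      omega
    have hinjOn : Set.InjOn Prod.fst S := fun p hp q hq h => huniq p hp q hq h
    have himg : (Prod.fst '' S) = Set.univ := by
      apply Set.eq_of_subset_of_ncard_le (Set.subset_univ _)
      · rw [Set.ncard_image_of_injOn hinjOn, hcard, Set.ncard_univ,
          Nat.card_eq_fintype_card]
    have hex : ∀ z : Z, ∃ x, (z, x) ∈ S := by
      intro z
      have : z ∈ Prod.fst '' S := himg ▸ Set.mem_univ z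
      obtain ⟨p, hp, hpz⟩ := this
      exact ⟨p.2, by rwa [← hpz, Prod.mk.eta]⟩
    choose f0 hf0 using hex
    have key : ∀ z x, (z, x) ∈ S → f0 z = x := by
      intro z x hx
      have := huniq (z, f0 z) (hf0 z) (z, x) hx rfl
      exact (Prod.mk.injEq _ _ _ _).mp this |>.2
    refine ⟨f0, key z0 x0' hz0, ?_, fun z => hvert _ (hf0 z)⟩
    intro z1 z2
    by_cases h : z1 = z2
    · subst h; simp
    · exact (hadj (z1, f0 z1) (hf0 z1) (z2, f0 z2) (hf0 z2)
        (fun he => h ((Prod.mk.injEq _ _ _ _).mp he).1)).2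
end

section
/- (Equivalent form of the least uncertain model in SEE) The uncertain models obtained by the SEE iteration satisfy f̂_k = f̂*(Z_k, f̂₀; L) for all k ≥ 1; i.e., the model obtained by recursively refining from f̂_{k-1} equals the model obtained by refining the initial model f̂₀ directly under the current zone Z_k. -/
/-- Pointwise containment of uncertain models. -/
def ModelLE {S A : Type*} (g f : S × A → Set S) : Prop := ∀ p, g p ⊆ f p

/-- Equivalent form of least uncertain model: under properties
(a) containment, (b) monotonicity in the prior model, (c) antitonicity in the
zone, and (d) monotone zones, the SEE models satisfy
`f̂_k = f̂*(Z_k, f̂₀; L)` for all `k ≥ 1`. -/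
theorem see_equivalent_form {S A : Type*}
    (Fstar : Set (S × A) → (S × A → Set S) → (S × A → Set S))
    (ha : ∀ (Zn : Set (S × A)) (g : S × A → Set S), ModelLE (Fstar Zn g) g)
    (hb : ∀ (Zn : Set (S × A)) (g1 g2 : S × A → Set S),
      ModelLE (Fstar Zn g1) g2 → ModelLE (Fstar Zn g1) (Fstar Zn g2))
    (hc : ∀ (Z1 Z2 : Set (S × A)) (g : S × A → Set S),
      Z2 ⊆ Z1 → ModelLE (Fstar Z1 g) (Fstar Z2 g))
    (Zseq : ℕ → Set (S × A)) (hd : ∀ k, Zseq k ⊆ Zseq (k + 1))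
    (fhat : ℕ → (S × A → Set S))
    (hrec : ∀ k, fhat (k + 1) = Fstar (Zseq (k + 1)) (fhat k)) :
    ∀ k : ℕ, 1 ≤ k → fhat k = Fstar (Zseq k) (fhat 0) := by
  intro k hk
  induction k with
  | zero => omega
  | succ n ih =>
    rw [hrec n]
    rcases Nat.eq_zero_or_pos n with h0 | hpos
    · rw [h0]
    · rw [ih hpos]
      funext p
      apply Set.Subset.antisymm
      · exact hb (Zseq (n+1)) (Fstar (Zseq n) (fhat 0)) (fhat 0)
          (fun q => (ha (Zseq (n+1)) _ q).trans (ha (Zseq n) (fhat 0) q)) p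
      · exact hb (Zseq (n+1)) (fhat 0) (Fstar (Zseq n) (fhat 0))
          (hc (Zseq (n+1)) (Zseq n) (fhat 0) (hd n)) p
end

section
/- The zero-level set of the optimal constraint decay function under an uncertain model f̂, namely Z_{G*} = {(x,u) : G*_{f̂}(x,u) = 0}, equals the maximum feasible zone Z*(f̂): Z_{G*} is a feasible zone under f̂, and every feasible zone under f̂ is contained in Z_{G*}. -/
open scoped ENat

/-- A trajectory of the uncertain model `fh` starting from `(x₀, u)` and
following policy `π` afterwards. -/
def IsTraj {X U : Type*} (fh : X × U → Set X) (π : X → U) (x0 : X) (u : U)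
    (traj : ℕ → X) : Prop :=
  traj 0 = x0 ∧ traj 1 ∈ fh (x0, u) ∧
    ∀ i : ℕ, 1 ≤ i → traj (i + 1) ∈ fh (traj i, π (traj i))

/-- First time `t` at which the constraint is violated (`h(x_t) > 0`), as an
extended natural number (`⊤` if the constraint is never violated). -/
noncomputable def firstViolation {X : Type*} (h : X → ℝ) (traj : ℕ → X) : ℕ∞ :=
  sInf {t : ℕ∞ | ∃ n : ℕ, t = (n : ℕ∞) ∧ 0 < h (traj n)}

/-- `N*_{f̂}(x,u)`: maximal over policies, minimal over model trajectories,
first constraint-violation time. -/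
noncomputable def Nstar {X U : Type*} (fh : X × U → Set X) (h : X → ℝ)
    (p : X × U) : ℕ∞ :=
  ⨆ π : X → U, ⨅ traj : {tr : ℕ → X // IsTraj fh π p.1 p.2 tr},
    firstViolation h traj.1

/-- `γ^n` for `n : ℕ∞`, with `γ^∞ := 0`. -/
noncomputable def gpow (γ : ℝ) (n : ℕ∞) : ℝ :=
  if n = ⊤ then 0 else γ ^ WithTop.untopD 0 n

/-- The optimal constraint decay function `G*_{f̂}(x,u) = γ^{N*_{f̂}(x,u)}`. -/
noncomputable def Gstar {X U : Type*} (fh : X × U → Set X) (h : X → ℝ)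
    (γ : ℝ) (p : X × U) : ℝ :=
  gpow γ (Nstar fh h p)

/-!
`G*` vanishes exactly where `N* = ∞`, i.e. where some policy keeps every model trajectory inside
the constraint set; since `𝒳 → 𝒰` is finite, the supremum defining `N*` is attained, so such a
policy exists whenever `N* = ∞`. The zone of all such `(x, u)` is feasible: its states satisfy
the constraint (a trajectory exists since `f̂` has nonempty values), and a safe policy from
`(x, u)` remains safe from `(x', π x')` for every successor `x'`. Conversely, a policy that picks
actions inside a feasible zone keeps every trajectory inside that zone, hence is safe.
-/

section

variable {X U : Type*} {fh : X × U → Set X} {h : X → ℝ}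

lemma gpow_eq_zero_iff {γ : ℝ} (hγ : γ ≠ 0) (n : ℕ∞) : gpow γ n = 0 ↔ n = ⊤ := by
  unfold gpow
  split_ifs with hn
  · simp [hn]
  · simp [hn, hγ]

lemma firstViolation_eq_top_iff (tr : ℕ → X) :
    firstViolation h tr = ⊤ ↔ ∀ n, h (tr n) ≤ 0 := by
  simp only [firstViolation, sInf_eq_top, Set.mem_ofPred_eq, forall_exists_index, and_imp]
  refine ⟨fun H n => not_lt.mp fun hn => ENat.natCast_ne_top n (H _ n rfl hn), ?_⟩
  rintro H _ n rfl hn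
  exact ((H n).not_gt hn).elim

lemma exists_isTraj (hne : ∀ p, (fh p).Nonempty) (π : X → U) (x : X) (u : U) :
    ∃ tr, IsTraj fh π x u tr := by
  choose next hnext using hne
  let step : X → X := fun y => next (y, π y)
  refine ⟨fun n => Nat.casesOn n x fun k => step^[k] (next (x, u)), rfl, hnext _, ?_⟩
  rintro (_ | k) hk
  · omega
  · simpa only [Function.iterate_succ_apply'] using hnext _

lemma IsTraj.exists_cons {π : X → U} {x x' : X} {u : U} {tr' : ℕ → X}
    (htr' : IsTraj fh π x' (π x') tr') (hx' : x' ∈ fh (x, u)) :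
    ∃ tr, IsTraj fh π x u tr ∧ ∀ n, tr (n + 1) = tr' n := by
  obtain ⟨h0, h1, hstep⟩ := htr'
  refine ⟨fun n => Nat.casesOn n x tr', ⟨rfl, (h0 ▸ hx' : tr' 0 ∈ fh (x, u)), ?_⟩, fun _ => rfl⟩
  rintro (_ | _ | k) hk
  · omega
  · simpa only [h0] using h1
  · exact hstep (k + 1) (by omega)

lemma IsTraj.forall_mem_of_invariant {π : X → U} {x : X} {u : U} {tr : ℕ → X} {S : Set X}
    (htr : IsTraj fh π x u tr) (hx : x ∈ S) (hu : fh (x, u) ⊆ S)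
    (hS : ∀ y ∈ S, fh (y, π y) ⊆ S) (n : ℕ) : tr n ∈ S := by
  induction n with
  | zero => exact htr.1 ▸ hx
  | succ n ih =>
    rcases Nat.eq_zero_or_pos n with rfl | hn
    · exact hu htr.2.1
    · exact hS _ ih (htr.2.2 n hn)

def IsSafePolicy (fh : X × U → Set X) (h : X → ℝ) (π : X → U) (p : X × U) : Prop :=
  ∀ tr, IsTraj fh π p.1 p.2 tr → ∀ n, h (tr n) ≤ 0

lemma Nstar_eq_top_of_isSafePolicy {π : X → U} {p : X × U} (hπ : IsSafePolicy fh h π p) :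
    Nstar fh h p = ⊤ :=
  top_le_iff.mp <| le_iSup_of_le π <| (iInf_eq_top.mpr fun tr :
    {tr // IsTraj fh π p.1 p.2 tr} => (firstViolation_eq_top_iff tr.1).mpr (hπ tr.1 tr.2)).ge

lemma exists_isSafePolicy_of_Nstar_eq_top [Finite X] [Finite U] {p : X × U}
    (hp : Nstar fh h p = ⊤) : ∃ π, IsSafePolicy fh h π p := by
  have : Nonempty (X → U) := ⟨fun _ => p.2⟩
  obtain ⟨π, hπ⟩ := exists_eq_ciSup_of_finite (f := fun π : X → U =>
    ⨅ tr : {tr : ℕ → X // IsTraj fh π p.1 p.2 tr}, firstViolation h tr.1)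
  refine ⟨π, fun tr htr => (firstViolation_eq_top_iff tr).mp ?_⟩
  exact iInf_eq_top.mp (hπ.trans hp) ⟨tr, htr⟩

lemma IsSafePolicy.le_zero (hne : ∀ p, (fh p).Nonempty) {π : X → U} {x : X} {u : U}
    (hπ : IsSafePolicy fh h π (x, u)) : h x ≤ 0 := by
  obtain ⟨tr, htr⟩ := exists_isTraj hne π x u
  simpa only [htr.1] using hπ tr htr 0

lemma IsSafePolicy.of_mem {π : X → U} {x x' : X} {u : U}
    (hπ : IsSafePolicy fh h π (x, u)) (hx' : x' ∈ fh (x, u)) :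
    IsSafePolicy fh h π (x', π x') := by
  intro tr' htr' n
  obtain ⟨tr, htr, hcons⟩ := htr'.exists_cons hx'
  simpa only [hcons] using hπ tr htr (n + 1)

lemma exists_policy_mem_of_mem_projX [Nonempty U] (Z : Set (X × U)) :
    ∃ π : X → U, ∀ x ∈ projX Z, (x, π x) ∈ Z := by
  have : ∀ x, ∃ u, x ∈ projX Z → (x, u) ∈ Z := fun x => by
    by_cases hx : x ∈ projX Z
    · exact hx.imp fun _ hu _ => hu
    · exact ⟨Classical.arbitrary U, fun h => absurd h hx⟩
  choose π hπ using this
  exact ⟨π, fun x hx => hπ x hx⟩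

lemma FeasibleZone.isSafePolicy {Z : Set (X × U)} (hZ : FeasibleZone {x | h x ≤ 0} fh Z)
    {π : X → U} (hπ : ∀ x ∈ projX Z, (x, π x) ∈ Z) {p : X × U} (hp : p ∈ Z) :
    IsSafePolicy fh h π p := fun _ htr n =>
  hZ.1 <| htr.forall_mem_of_invariant (S := projX Z) ⟨p.2, hp⟩ (hZ.2 p hp)
    (fun y hy => hZ.2 _ (hπ y hy)) n

end

theorem gstar_zero_level_set_eq_max_feasible_zone_general {X U : Type*}
    [Fintype X] [Fintype U]
    (fh : X × U → Set X) (hne : ∀ p, (fh p).Nonempty)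
    (h : X → ℝ) (γ : ℝ) (hγ : γ ∈ Set.Ioo (0 : ℝ) 1) :
    FeasibleZone {x | h x ≤ 0} fh {p | Gstar fh h γ p = 0} ∧
      ∀ Z : Set (X × U), FeasibleZone {x | h x ≤ 0} fh Z →
        Z ⊆ {p | Gstar fh h γ p = 0} := by
  have hG (p : X × U) : Gstar fh h γ p = 0 ↔ ∃ π, IsSafePolicy fh h π p := by
    rw [Gstar, gpow_eq_zero_iff hγ.1.ne']
    exact ⟨exists_isSafePolicy_of_Nstar_eq_top,
      fun ⟨_, hπ⟩ => Nstar_eq_top_of_isSafePolicy hπ⟩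
  refine ⟨⟨?_, ?_⟩, ?_⟩
  · rintro x ⟨u, hu⟩
    obtain ⟨π, hπ⟩ := (hG _).mp hu
    exact hπ.le_zero hne
  · rintro p hp x' hx'
    obtain ⟨π, hπ⟩ := (hG p).mp hp
    exact ⟨π x', (hG _).mpr ⟨π, hπ.of_mem hx'⟩⟩
  · intro Z hZ p hp
    have : Nonempty U := ⟨p.2⟩
    obtain ⟨π, hπ⟩ := exists_policy_mem_of_mem_projX Z
    exact (hG p).mpr ⟨π, hZ.isSafePolicy hπ hp⟩

/-- the zero-level set of the optimal CDF is the maximum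
feasible zone: it is a feasible zone, and it contains every feasible zone. -/
theorem gstar_zero_level_set_eq_max_feasible_zone {X U : Type*}
    [Fintype X] [Fintype U] [Nonempty X] [Nonempty U]
    (fh : X × U → Set X) (hne : ∀ p, (fh p).Nonempty)
    (h : X → ℝ) (γ : ℝ) (hγ : γ ∈ Set.Ioo (0 : ℝ) 1) :
    FeasibleZone {x | h x ≤ 0} fh {p | Gstar fh h γ p = 0} ∧
      ∀ Z : Set (X × U), FeasibleZone {x | h x ≤ 0} fh Z →
        Z ⊆ {p | Gstar fh h γ p = 0} :=
  gstar_zero_level_set_eq_max_feasible_zone_general fh hne h γ hγ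
end

section
/- (Risky Bellman operator is a contraction) The operator B defined by (BG)(x,u) = c(x) + (1−c(x))·γ·max_{x'∈f̂(x,u)} min_{u'∈𝒰} G(x',u') is a γ-contraction with respect to the uniform norm on bounded functions G : 𝒵 → ℝ: ‖BG₁ − BG₂‖_∞ ≤ γ‖G₁ − G₂‖_∞. -/
/-!
Both branches of the risky Bellman operator are harmless: where `h x > 0` the operator is the
constant `1`, and elsewhere it is `γ` times a max–min of `G`. Over finite nonempty index sets
the maps `f ↦ ⨆ i, f i` and `f ↦ ⨅ i, f i` are `1`-Lipschitz for the uniform norm, hence so is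
their composite, and the factor `γ` gives the contraction.
-/

/-- The risky Bellman operator
`(BG)(x,u) = c(x) + (1 − c(x))·γ·max_{x'∈f̂(x,u)} min_{u'∈𝒰} G(x',u')`,
where `c(x) = 1` if `h(x) > 0` and `0` otherwise. -/
noncomputable def riskyBellman {X U : Type*} (fh : X × U → Set X) (h : X → ℝ)
    (γ : ℝ) (G : X × U → ℝ) (p : X × U) : ℝ :=
  (if 0 < h p.1 then (1 : ℝ) else 0) +
    (1 - if 0 < h p.1 then (1 : ℝ) else 0) * γ *
      ⨆ x' : fh p, ⨅ u' : U, G (↑x', u')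

section FiniteSupInf

variable {ι κ : Type*} [Finite ι] [Nonempty ι] [Finite κ] [Nonempty κ] {M : ℝ}

lemma ciSup_le_ciSup_add_of_le_add {f g : ι → ℝ} (hfg : ∀ i, f i ≤ g i + M) :
    ⨆ i, f i ≤ (⨆ i, g i) + M :=
  ciSup_le fun i => (hfg i).trans (add_le_add_left (le_ciSup (Finite.bddAbove_range g) i) M)

lemma ciInf_le_ciInf_add_of_le_add {f g : ι → ℝ} (hfg : ∀ i, f i ≤ g i + M) :
    ⨅ i, f i ≤ (⨅ i, g i) + M :=
  le_ciInf_add fun i => (ciInf_le (Finite.bddBelow_range f) i).trans (hfg i)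

lemma abs_ciSup_sub_ciSup_le {f g : ι → ℝ} (hfg : ∀ i, |f i - g i| ≤ M) :
    |(⨆ i, f i) - ⨆ i, g i| ≤ M := by
  rw [abs_sub_le_iff, sub_le_iff_le_add', sub_le_iff_le_add']
  constructor
  · exact ciSup_le_ciSup_add_of_le_add fun i => by linarith [(abs_le.mp (hfg i)).2]
  · exact ciSup_le_ciSup_add_of_le_add fun i => by linarith [(abs_le.mp (hfg i)).1]

lemma abs_ciInf_sub_ciInf_le {f g : ι → ℝ} (hfg : ∀ i, |f i - g i| ≤ M) :
    |(⨅ i, f i) - ⨅ i, g i| ≤ M := by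
  rw [abs_sub_le_iff, sub_le_iff_le_add', sub_le_iff_le_add']
  constructor
  · exact ciInf_le_ciInf_add_of_le_add fun i => by linarith [(abs_le.mp (hfg i)).2]
  · exact ciInf_le_ciInf_add_of_le_add fun i => by linarith [(abs_le.mp (hfg i)).1]

lemma abs_ciSup_ciInf_sub_ciSup_ciInf_le {f g : ι → κ → ℝ} (hfg : ∀ i j, |f i j - g i j| ≤ M) :
    |(⨆ i, ⨅ j, f i j) - ⨆ i, ⨅ j, g i j| ≤ M :=
  abs_ciSup_sub_ciSup_le fun i => abs_ciInf_sub_ciInf_le (hfg i)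

end FiniteSupInf

section RiskyBellman

variable {X U : Type*} (fh : X × U → Set X) (h : X → ℝ) (γ : ℝ) (G : X × U → ℝ) {p : X × U}

lemma riskyBellman_of_pos (hp : 0 < h p.1) : riskyBellman fh h γ G p = 1 := by
  simp only [riskyBellman, if_pos hp]
  ring

lemma riskyBellman_of_nonpos (hp : ¬0 < h p.1) :
    riskyBellman fh h γ G p = γ * ⨆ x' : fh p, ⨅ u' : U, G (↑x', u') := by
  simp only [riskyBellman, if_neg hp]
  ring

lemma abs_riskyBellman_sub_le [Finite X] [Finite U] [Nonempty U] (hp : (fh p).Nonempty)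
    (hγ : 0 ≤ γ) {G1 G2 : X × U → ℝ} {M : ℝ} (hM : 0 ≤ M) (hG : ∀ q, |G1 q - G2 q| ≤ M) :
    |riskyBellman fh h γ G1 p - riskyBellman fh h γ G2 p| ≤ γ * M := by
  by_cases hc : 0 < h p.1
  · rw [riskyBellman_of_pos fh h γ G1 hc, riskyBellman_of_pos fh h γ G2 hc, sub_self, abs_zero]
    exact mul_nonneg hγ hM
  · rw [riskyBellman_of_nonpos fh h γ G1 hc, riskyBellman_of_nonpos fh h γ G2 hc, ← mul_sub,
      abs_mul, abs_of_nonneg hγ]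
    have : Nonempty (fh p) := hp.to_subtype
    exact mul_le_mul_of_nonneg_left
      (abs_ciSup_ciInf_sub_ciSup_ciInf_le fun x' u' => hG (↑x', u')) hγ

end RiskyBellman

theorem riskyBellman_contraction_general {X U : Type*} [Fintype X] [Fintype U]
    [Nonempty U]
    (fh : X × U → Set X) (hne : ∀ p, (fh p).Nonempty)
    (h : X → ℝ) (γ : ℝ) (hγ : γ ∈ Set.Ioo (0 : ℝ) 1)
    (G1 G2 : X × U → ℝ) :
    (⨆ p : X × U, |riskyBellman fh h γ G1 p - riskyBellman fh h γ G2 p|) ≤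
      γ * ⨆ p : X × U, |G1 p - G2 p| := by
  set M := ⨆ p : X × U, |G1 p - G2 p|
  have hM : 0 ≤ M := Real.iSup_nonneg fun p => abs_nonneg _
  have hG : ∀ q, |G1 q - G2 q| ≤ M := le_ciSup (Finite.bddAbove_range _)
  exact Real.iSup_le (fun p => abs_riskyBellman_sub_le fh h γ (hne p) hγ.1.le hM hG)
    (mul_nonneg hγ.1.le hM)

/-- the risky Bellman operator is a `γ`-contraction in the
uniform norm: `‖BG₁ − BG₂‖_∞ ≤ γ‖G₁ − G₂‖_∞`. -/
theorem riskyBellman_contraction {X U : Type*} [Fintype X] [Fintype U]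
    [Nonempty X] [Nonempty U]
    (fh : X × U → Set X) (hne : ∀ p, (fh p).Nonempty)
    (h : X → ℝ) (γ : ℝ) (hγ : γ ∈ Set.Ioo (0 : ℝ) 1)
    (G1 G2 : X × U → ℝ) :
    (⨆ p : X × U, |riskyBellman fh h γ G1 p - riskyBellman fh h γ G2 p|) ≤
      γ * ⨆ p : X × U, |G1 p - G2 p| :=
  riskyBellman_contraction_general fh hne h γ hγ G1 G2
end

section
/- Let G be the unique fixed point of the risky Bellman operator. If G(x,u) = 0, then h(x) ≤ 0 and for every x' ∈ f̂(x,u) there exists u' ∈ 𝒰 with G(x',u') = 0. Consequently, the zero-level set {(x,u) : G(x,u) = 0} is a feasible zone under f̂. -/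
/-- if `G` is the fixed point of the risky Bellman operator and
`G(x,u) = 0`, then `h(x) ≤ 0` and every `x' ∈ f̂(x,u)` admits `u'` with
`G(x',u') = 0`; hence the zero-level set of `G` is a feasible zone under `f̂`. -/
theorem zero_level_set_feasible {X U : Type*} [Fintype X] [Fintype U]
    [Nonempty X] [Nonempty U]
    (fh : X × U → Set X) (hne : ∀ p, (fh p).Nonempty)
    (h : X → ℝ) (γ : ℝ) (hγ : γ ∈ Set.Ioo (0 : ℝ) 1)
    (G : X × U → ℝ) (hrange : ∀ p, G p ∈ Set.Icc (0 : ℝ) 1)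
    (hfix : ∀ p, G p = riskyBellman fh h γ G p) :
    (∀ p : X × U, G p = 0 →
      h p.1 ≤ 0 ∧ ∀ x' ∈ fh p, ∃ u' : U, G (x', u') = 0) ∧
      FeasibleZone {x | h x ≤ 0} fh {p | G p = 0} := by
  have key : ∀ p : X × U, G p = 0 →
      h p.1 ≤ 0 ∧ ∀ x' ∈ fh p, ∃ u' : U, G (x', u') = 0 := by
    intro p hp
    have hfp := hfix p
    rw [riskyBellman] at hfp
    by_cases hh : 0 < h p.1
    · simp only [hh, if_true] at hfp
      rw [hp] at hfp
      norm_num at hfp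
    · refine ⟨le_of_not_gt hh, ?_⟩
      simp only [hh, if_false] at hfp
      rw [hp] at hfp
      have hS : (⨆ x' : fh p, ⨅ u' : U, G (↑x', u')) = 0 := by
        have : γ * (⨆ x' : fh p, ⨅ u' : U, G (↑x', u')) = 0 := by linarith
        exact (mul_eq_zero.mp this).resolve_left (ne_of_gt hγ.1)
      intro x' hx'
      haveI : Nonempty (fh p) := ⟨⟨x', hx'⟩⟩
      have hbdd : BddAbove (Set.range fun x' : fh p => ⨅ u' : U, G (↑x', u')) :=
        Finite.bddAbove_range _
      have hle : (⨅ u' : U, G (x', u')) ≤ 0 := by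
        rw [← hS]
        exact le_ciSup hbdd ⟨x', hx'⟩
      obtain ⟨u0, hu0⟩ := Finite.exists_min (fun u' : U => G (x', u'))
      have h1 : G (x', u0) ≤ ⨅ u' : U, G (x', u') := le_ciInf hu0
      exact ⟨u0, le_antisymm (h1.trans hle) (hrange (x', u0)).1⟩
  refine ⟨key, ?_, ?_⟩
  · rintro x ⟨u, hu⟩
    exact (key (x, u) hu).1
  · intro p hp x' hx'
    obtain ⟨u', hu'⟩ := (key p hp).2 x' hx'
    exact ⟨u', hu'⟩
end

section
/- Let G be the unique fixed point of the risky Bellman operator and let Z be any feasible zone under f̂. Then G(x,u) = 0 for all (x,u) ∈ Z. -/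
/-- if `G` is the fixed point of the risky Bellman operator and
`Z` is any feasible zone under `f̂`, then `G` vanishes on `Z`. -/
theorem fixed_point_zero_on_feasible_zone {X U : Type*} [Fintype X] [Fintype U]
    [Nonempty X] [Nonempty U]
    (fh : X × U → Set X) (hne : ∀ p, (fh p).Nonempty)
    (h : X → ℝ) (γ : ℝ) (hγ : γ ∈ Set.Ioo (0 : ℝ) 1)
    (G : X × U → ℝ) (hrange : ∀ p, G p ∈ Set.Icc (0 : ℝ) 1)
    (hfix : ∀ p, G p = riskyBellman fh h γ G p)
    (Z : Set (X × U)) (hZ : FeasibleZone {x | h x ≤ 0} fh Z) :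
    ∀ p ∈ Z, G p = 0 := by
  have key : ∀ n : ℕ, ∀ p ∈ Z, G p ≤ γ ^ n := by
    intro n
    induction n with
    | zero => intro p hp; simpa using (hrange p).2
    | succ n ih =>
      intro p hp
      have hx : h p.1 ≤ 0 := hZ.1 ⟨p.2, hp⟩
      have hnlt : ¬ 0 < h p.1 := not_lt.mpr hx
      have : Nonempty (fh p) := (hne p).to_subtype
      have hsup : (⨆ x' : fh p, ⨅ u' : U, G (↑x', u')) ≤ γ ^ n := by
        apply ciSup_le
        intro x'
        have hx' : (x' : X) ∈ projX Z := hZ.2 p hp x'.2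
        obtain ⟨u0, hu0⟩ := hx'
        exact ciInf_le_of_le (Finite.bddBelow_range _) u0 (ih _ hu0)
      have hfp := hfix p
      rw [riskyBellman, if_neg hnlt] at hfp
      rw [hfp]
      simp only [sub_zero, one_mul, zero_add]
      calc γ * (⨆ x' : fh p, ⨅ u' : U, G (↑x', u')) ≤ γ * γ ^ n :=
            mul_le_mul_of_nonneg_left hsup hγ.1.le
        _ = γ ^ (n + 1) := (pow_succ' γ n).symm
  intro p hp
  have h0 : Filter.Tendsto (fun n : ℕ => γ ^ n) Filter.atTop (nhds 0) :=
    tendsto_pow_atTop_nhds_zero_of_lt_one hγ.1.le hγ.2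
  have hle : G p ≤ 0 := ge_of_tendsto' h0 (fun n => key n p hp)
  exact le_antisymm hle (hrange p).1
end

section
/- If the uncertain model f̂' is obtained from f̂ by removing only transition pairs that belong to no N-clique of D_f̂(L) (removable vertices of the second kind), and f̂ is well-calibrated under an L-Lipschitz true model f, then f̂' is still well-calibrated under f: f(x,u) ∈ f̂'(x,u) for all (x,u) ∈ 𝒵. -/
/-- removing only second-kind-removable transition pairs (those
in no `N`-clique of `D_f̂(L)`) preserves well-calibration under an
`L`-Lipschitz true model `f`. -/
theorem well_calibrated_after_second_kind_pruning {Z X : Type*} [Fintype Z]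
    [MetricSpace Z] [MetricSpace X] (L : ℝ)
    (f : Z → X) (hLip : ∀ z1 z2, dist (f z1) (f z2) ≤ L * dist z1 z2)
    (fh fh' : Z → Set X)
    (hcalib : ∀ z, f z ∈ fh z)
    (hsub : ∀ z, fh' z ⊆ fh z)
    (hremoved : ∀ (z : Z), ∀ x' ∈ fh z, x' ∉ fh' z →
      ¬ ∃ S : Set (Z × X), IsNClique L fh S ∧ (z, x') ∈ S) :
    ∀ z, f z ∈ fh' z := by
  intro z
  by_contra h
  refine hremoved z (f z) (hcalib z) h ⟨Set.range (fun w => (w, f w)), ⟨?_, ?_, ?_⟩, ⟨z, rfl⟩⟩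
  · rintro p ⟨w, rfl⟩; exact hcalib w
  · have := Nat.card_range_of_injective (f := fun w : Z => (w, f w))
      (fun a b hab => congrArg Prod.fst hab)
    rw [← Nat.card_coe_set_eq, this, Nat.card_eq_fintype_card]
  · rintro p ⟨a, rfl⟩ q ⟨b, rfl⟩ hpq
    have hab : a ≠ b := fun e => hpq (by rw [e])
    exact ⟨hab, hLip a b⟩
end
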